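/- arXiv:2502.05448 — 3 statements merged into one kernel-verified Lean document; each statement's English description precedes it below -/
import Mathlib

section
/- Recursive feasibility of the shifted candidate: if (s*_{0|t}, v*_{0|t},…,v*_{N−1|t}) is feasible for the tube MPC problem at state x_t (satisfying x_t − s*_{0|t} ∈ Z, nominal dynamics, tightened state constraints s*_{k|t} ∈ X ⊖ Z for k ≥ 2, tightened input constraints v*_{k|t} ∈ U ⊖ KZ, and terminal constraint s*_{N|t} ∈ X_f), then the shifted sequence (s*_{1|t}, v*_{1|t},…,v*_{N−1|t}, K s*_{N|t}) is feasible at x_{t+1} = A x_t + B u_t + w for every w ∈ W, where u_t = K(x_t − s*_{0|t}) + v*_{0|t}. -/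
/-- Minkowski (Pontryagin) difference: `X ⊖ Z = { x : x + z ∈ X for all z ∈ Z }`. -/
def mdiff {α : Type*} [Add α] (X Z : Set α) : Set α := {x | ∀ z ∈ Z, x + z ∈ X}

/-- recursive feasibility of the shifted candidate solution in tube MPC. -/
theorem shifted_candidate_feasible {n m : ℕ}
    (A : Matrix (Fin n) (Fin n) ℝ) (B : Matrix (Fin n) (Fin m) ℝ)
    (K : Matrix (Fin m) (Fin n) ℝ)
    (W Z X : Set (Fin n → ℝ)) (U : Set (Fin m → ℝ)) (N : ℕ) (hN : 1 ≤ N)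
    (hZinv : ∀ e ∈ Z, ∀ w ∈ W, (A + B * K).mulVec e + w ∈ Z)
    (Xf : Set (Fin n → ℝ))
    (hXf : Xf = {s | ∀ i : ℕ, ((A + B * K) ^ i).mulVec s ∈ mdiff X Z ∧
      K.mulVec (((A + B * K) ^ i).mulVec s) ∈ mdiff U (K.mulVec '' Z)})
    (x : Fin n → ℝ) (s : ℕ → Fin n → ℝ) (v : ℕ → Fin m → ℝ)
    -- feasibility at time t:
    (hinit : x - s 0 ∈ Z)
    (hdyn : ∀ k < N, s (k + 1) = A.mulVec (s k) + B.mulVec (v k))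
    (hstate : ∀ k, 2 ≤ k → k ≤ N - 1 → s k ∈ mdiff X Z)
    (hinput : ∀ k < N, v k ∈ mdiff U (K.mulVec '' Z))
    (hterm : s N ∈ Xf) :
    ∀ w ∈ W,
      let u := K.mulVec (x - s 0) + v 0
      let x' := A.mulVec x + B.mulVec u + w
      let s' : ℕ → Fin n → ℝ := fun k => if k = N then (A + B * K).mulVec (s N) else s (k + 1)
      let v' : ℕ → Fin m → ℝ := fun k => if k = N - 1 then K.mulVec (s N) else v (k + 1)
      x' - s' 0 ∈ Z ∧
      (∀ k < N, s' (k + 1) = A.mulVec (s' k) + B.mulVec (v' k)) ∧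
      (∀ k, 2 ≤ k → k ≤ N - 1 → s' k ∈ mdiff X Z) ∧
      (∀ k < N, v' k ∈ mdiff U (K.mulVec '' Z)) ∧
      s' N ∈ Xf := by

  intro w hw
  intro u x' s' v'
  rw [hXf] at hterm
  simp only [Set.mem_setOf_eq] at hterm
  have key : ∀ e : Fin n → ℝ,
      (A + B * K).mulVec e = A.mulVec e + B.mulVec (K.mulVec e) := by
    intro e
    rw [Matrix.add_mulVec, ← Matrix.mulVec_mulVec]
  refine ⟨?_, ?_, ?_, ?_, ?_⟩
  · have hd0 := hdyn 0 hN
    have h1 : x' - s' 0 = (A + B * K).mulVec (x - s 0) + w := by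
      simp only [s', if_neg (by omega : (0:ℕ) ≠ N), hd0, x', u]
      simp only [key, Matrix.mulVec_sub, Matrix.mulVec_add]
      abel
    rw [h1]
    exact hZinv _ hinit w hw
  · intro k hk
    by_cases hkN : k = N - 1
    · subst hkN
      simp only [s', v', Nat.sub_add_cancel hN, if_pos rfl,
        if_neg (by omega : N - 1 ≠ N)]
      exact key (s N)
    · simp only [s', v', if_neg (by omega : k + 1 ≠ N),
        if_neg (by omega : k ≠ N), if_neg hkN]
      exact hdyn (k + 1) (by omega)
  · intro k hk2 hk1
    simp only [s', if_neg (by omega : k ≠ N)]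
    by_cases h : k = N - 1
    · subst h
      rw [Nat.sub_add_cancel hN]
      simpa using (hterm 0).1
    · exact hstate (k + 1) (by omega) (by omega)
  · intro k hk
    by_cases h : k = N - 1
    · subst h
      simp only [v', if_pos rfl]
      simpa using (hterm 0).2
    · simp only [v', if_neg h]
      exact hinput (k + 1) (by omega)
  · simp only [s', if_pos rfl, hXf, Set.mem_setOf_eq]
    intro i
    have h := hterm (i + 1)
    rw [pow_succ, ← Matrix.mulVec_mulVec] at h
    exact h
end

section
/- Lyapunov decrease of the MPC value function: if P satisfies the discrete Riccati/Lyapunov inequality (A+BK)ᵀP(A+BK) + Q + KᵀRK ⪯ P, then for the shifted candidate solution the cost satisfies J_{t+1} ≤ J*_t − (‖s*_{0|t}‖²_Q + ‖v*_{0|t}‖²_R), hence the optimal values satisfy J*_{t+1} ≤ J*_t − ‖s*_{0|t}‖²_Q − ‖v*_{0|t}‖²_R. -/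
open Matrix

/-- Lyapunov decrease of the MPC value function under the
discrete Riccati/Lyapunov inequality `(A+BK)ᵀP(A+BK) + Q + KᵀRK ⪯ P`.
`Acl` denotes `A + BK`; `‖x‖²_M` is written `x ⬝ᵥ M.mulVec x`. -/
theorem mpc_value_function_decrease {n m : ℕ}
    (Acl : Matrix (Fin n) (Fin n) ℝ) (K : Matrix (Fin m) (Fin n) ℝ)
    (Q P : Matrix (Fin n) (Fin n) ℝ) (R : Matrix (Fin m) (Fin m) ℝ)
    (hQ : Q.PosDef) (hR : R.PosDef) (hP : P.PosDef)
    (hric : ∀ x : Fin n → ℝ,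
      (Acl.mulVec x) ⬝ᵥ P.mulVec (Acl.mulVec x) + x ⬝ᵥ Q.mulVec x +
        (K.mulVec x) ⬝ᵥ R.mulVec (K.mulVec x) ≤ x ⬝ᵥ P.mulVec x)
    (N : ℕ) (hN : 1 ≤ N) (s : ℕ → Fin n → ℝ) (v : ℕ → Fin m → ℝ)
    (Jt : ℝ)
    (hJt : Jt = (∑ k ∈ Finset.range N,
        ((s k) ⬝ᵥ Q.mulVec (s k) + (v k) ⬝ᵥ R.mulVec (v k))) +
      (s N) ⬝ᵥ P.mulVec (s N))
    (Jcand : ℝ)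
    (hJcand : Jcand = (∑ k ∈ Finset.Ico 1 N,
        ((s k) ⬝ᵥ Q.mulVec (s k) + (v k) ⬝ᵥ R.mulVec (v k))) +
      (s N) ⬝ᵥ Q.mulVec (s N) + (K.mulVec (s N)) ⬝ᵥ R.mulVec (K.mulVec (s N)) +
      (Acl.mulVec (s N)) ⬝ᵥ P.mulVec (Acl.mulVec (s N)))
    (Jnext : ℝ) (hopt : Jnext ≤ Jcand) :
    Jcand ≤ Jt - ((s 0) ⬝ᵥ Q.mulVec (s 0) + (v 0) ⬝ᵥ R.mulVec (v 0)) ∧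
    Jnext ≤ Jt - (s 0) ⬝ᵥ Q.mulVec (s 0) - (v 0) ⬝ᵥ R.mulVec (v 0) := by
  have hsplit : (∑ k ∈ Finset.range N,
      ((s k) ⬝ᵥ Q.mulVec (s k) + (v k) ⬝ᵥ R.mulVec (v k))) =
      ((s 0) ⬝ᵥ Q.mulVec (s 0) + (v 0) ⬝ᵥ R.mulVec (v 0)) +
      ∑ k ∈ Finset.Ico 1 N, ((s k) ⬝ᵥ Q.mulVec (s k) + (v k) ⬝ᵥ R.mulVec (v k)) := by
    rw [Finset.range_eq_Ico,
      ← Finset.sum_Ico_consecutive _ (Nat.zero_le 1) hN]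
    simp
  have h1 : Jcand ≤ Jt - ((s 0) ⬝ᵥ Q.mulVec (s 0) + (v 0) ⬝ᵥ R.mulVec (v 0)) := by
    have := hric (s N)
    rw [hJcand, hJt, hsplit]; linarith
  exact ⟨h1, by linarith⟩
end

section
/- A quadratic t + ξω + ξ²Ω is nonnegative for all ξ ∈ [w₁, w₂] if and only if there exist φ₁, φ₂ ≥ 0 such that the quadratic t + ξω + ξ²Ω − φ₁(w₂ − ξ) − φ₂(ξ − w₁) is nonnegative for all ξ ∈ ℝ (an S-lemma / nonnegativity certificate on an interval), assuming Ω ≥ 0. -/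
/-!
A convex quadratic `q` attains its minimum over `[w₁, w₂]` at a point `a` satisfying the
Karush–Kuhn–Tucker conditions `q'(a) = φ₂ - φ₁` with `φᵢ ≥ 0` and complementary slackness
`φ₁ (w₂ - a) = φ₂ (a - w₁) = 0`: `a` is `w₁`, `w₂` or the vertex `-ω / (2Ω)`, according to the
sign of `q'` at the endpoints. For such multipliers the certificate `q ξ - φ₁ (w₂ - ξ) - φ₂ (ξ - w₁)`
equals `q a + Ω (ξ - a)²`, which is nonnegative on all of `ℝ` once `q a ≥ 0`.
-/

section IntervalCertificate

variable {t ω Ω w₁ w₂ : ℝ}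

theorem exists_kkt_point_quadratic (hΩ : 0 ≤ Ω) (hw : w₁ ≤ w₂) :
    ∃ a ∈ Set.Icc w₁ w₂, ∃ φ₁ φ₂ : ℝ, 0 ≤ φ₁ ∧ 0 ≤ φ₂ ∧ ω + 2 * Ω * a = φ₂ - φ₁ ∧
      φ₁ * (w₂ - a) = 0 ∧ φ₂ * (a - w₁) = 0 := by
  rcases le_or_gt 0 (ω + 2 * Ω * w₁) with hleft | hleft
  · exact ⟨w₁, ⟨le_rfl, hw⟩, 0, _, le_rfl, hleft, by ring, by ring, by ring⟩
  rcases le_or_gt (ω + 2 * Ω * w₂) 0 with hright | hright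
  · exact ⟨w₂, ⟨hw, le_rfl⟩, _, 0, neg_nonneg.mpr hright, le_rfl, by ring, by ring, by ring⟩
  have hΩpos : 0 < Ω := lt_of_le_of_ne hΩ fun h => by subst h; linarith
  refine ⟨-ω / (2 * Ω), ⟨?_, ?_⟩, 0, 0, le_rfl, le_rfl, by field_simp; ring, by ring, by ring⟩
  · rw [le_div_iff₀ (by positivity)]; linarith
  · rw [div_le_iff₀ (by positivity)]; linarith

theorem quadratic_certificate_nonneg_of_kkt (hΩ : 0 ≤ Ω) {a φ₁ φ₂ : ℝ}
    (hslope : ω + 2 * Ω * a = φ₂ - φ₁) (hslack₁ : φ₁ * (w₂ - a) = 0)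
    (hslack₂ : φ₂ * (a - w₁) = 0) (ha : 0 ≤ t + a * ω + a ^ 2 * Ω) (ξ : ℝ) :
    0 ≤ t + ξ * ω + ξ ^ 2 * Ω - φ₁ * (w₂ - ξ) - φ₂ * (ξ - w₁) := by
  have hsplit : t + ξ * ω + ξ ^ 2 * Ω - φ₁ * (w₂ - ξ) - φ₂ * (ξ - w₁) =
      (t + a * ω + a ^ 2 * Ω) + Ω * (ξ - a) ^ 2 := by
    linear_combination (ξ - a) * hslope - hslack₁ - hslack₂
  rw [hsplit]
  positivity

theorem nonneg_on_Icc_of_certificate {f : ℝ → ℝ} {φ₁ φ₂ : ℝ} (hφ₁ : 0 ≤ φ₁) (hφ₂ : 0 ≤ φ₂)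
    (hcert : ∀ ξ, 0 ≤ f ξ - φ₁ * (w₂ - ξ) - φ₂ * (ξ - w₁)) :
    ∀ ξ ∈ Set.Icc w₁ w₂, 0 ≤ f ξ := by
  rintro ξ ⟨h₁, h₂⟩
  nlinarith [hcert ξ, mul_nonneg hφ₁ (sub_nonneg.mpr h₂), mul_nonneg hφ₂ (sub_nonneg.mpr h₁)]

end IntervalCertificate

/-- S-lemma / nonnegativity certificate for a quadratic on an interval:
`t + ξω + ξ²Ω ≥ 0` on `[w₁, w₂]` (with `Ω ≥ 0`) iff there are multipliers
`φ₁, φ₂ ≥ 0` making `t + ξω + ξ²Ω − φ₁(w₂ − ξ) − φ₂(ξ − w₁)` nonnegative on all of `ℝ`.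
`Om` denotes `Ω`. -/
theorem quadratic_interval_nonneg_iff_certificate (t ω Om w₁ w₂ : ℝ)
    (hOm : 0 ≤ Om) (hw : w₁ < w₂) :
    (∀ ξ ∈ Set.Icc w₁ w₂, 0 ≤ t + ξ * ω + ξ ^ 2 * Om) ↔
    ∃ φ₁ φ₂ : ℝ, 0 ≤ φ₁ ∧ 0 ≤ φ₂ ∧
      ∀ ξ : ℝ, 0 ≤ t + ξ * ω + ξ ^ 2 * Om - φ₁ * (w₂ - ξ) - φ₂ * (ξ - w₁) := by
  constructor
  · intro hq
    obtain ⟨a, ha, φ₁, φ₂, hφ₁, hφ₂, hslope, hslack₁, hslack₂⟩ :=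
      exists_kkt_point_quadratic (ω := ω) hOm hw.le
    exact ⟨φ₁, φ₂, hφ₁, hφ₂,
      quadratic_certificate_nonneg_of_kkt hOm hslope hslack₁ hslack₂ (hq a ha)⟩
  · rintro ⟨φ₁, φ₂, hφ₁, hφ₂, hcert⟩
    exact nonneg_on_Icc_of_certificate hφ₁ hφ₂ hcert
end
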